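/- Let D₁₁, D₂₂ > 0 and define u : ℝ³ ∖ {(0,0,0)} → ℝ by u(x, y, θ) = [ (1/16)(x²/D₂₂ + θ²/D₁₁)² + (y − xθ/2)²/(D₁₁D₂₂) ]^{−1/2}. Then u is smooth on ℝ³ ∖ {(0,0,0)} and satisfies D₁₁ (∂_θ² u)(x, y, θ) + D₂₂ ((∂_x + θ∂_y)² u)(x, y, θ) = 0 at every point (x, y, θ) ≠ (0, 0, 0). -/

import Mathlib

/-!
STATEMENT 11: For D₁₁, D₂₂ > 0, the function
u(x,y,θ) = [ (1/16)(x²/D₂₂ + θ²/D₁₁)² + (y − xθ/2)²/(D₁₁D₂₂) ]^{−1/2}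
is smooth on ℝ³ ∖ {0} and satisfies
D₁₁ ∂_θ² u + D₂₂ (∂_x + θ∂_y)² u = 0 away from the origin.
Points are written p = (x, y, θ) : ℝ × ℝ × ℝ.
-/

open scoped ContDiff

/-- `∂_θ`, acting on functions of p = (x, y, θ). -/
noncomputable def Dtheta (f : ℝ × ℝ × ℝ → ℝ) (p : ℝ × ℝ × ℝ) : ℝ :=
  fderiv ℝ f p (0, 0, 1)

/-- The Heisenberg-approximation horizontal derivative `∂_x + θ ∂_y`,
acting on functions of p = (x, y, θ). -/
noncomputable def Dhor (f : ℝ × ℝ × ℝ → ℝ) (p : ℝ × ℝ × ℝ) : ℝ :=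
  fderiv ℝ f p (1, p.2.2, 0)

/-- The fundamental-solution-type function
`[ (1/16)(x²/D₂₂ + θ²/D₁₁)² + (y − xθ/2)²/(D₁₁D₂₂) ]^{−1/2}`. -/
noncomputable def ufun (D11 D22 : ℝ) (p : ℝ × ℝ × ℝ) : ℝ :=
  ((1 / 16) * (p.1 ^ 2 / D22 + p.2.2 ^ 2 / D11) ^ 2
      + (p.2.1 - p.1 * p.2.2 / 2) ^ 2 / (D11 * D22)) ^ (-(1 : ℝ) / 2)

/-!
Write `u = Q ^ (-1/2)` with `Q = A² / 16 + B² / (D₁₁ D₂₂)`, `A = x²/D₂₂ + θ²/D₁₁`,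
`B = y − xθ/2`, and `L = D₁₁ T² + D₂₂ H²` with `T = ∂_θ`, `H = ∂_x + θ∂_y`. Since `T` and `H` are
first-order, the chain rule gives `L (Q ^ r) = r Q ^ (r-2) ((r-1) Γ + Q · L Q)` with
`Γ = D₁₁ (T Q)² + D₂₂ (H Q)²`. A direct computation gives `Γ = A Q` and `L Q = (3/2) A`, hence
`L (Q ^ r) = r (r + 1/2) A Q ^ (r-1)`, which vanishes for `r = -1/2`.
-/

open Topology

section DerivAlong

variable {E : Type*} [NormedAddCommGroup E] [NormedSpace ℝ E]

noncomputable def derivAlong (V : E → E) (f : E → ℝ) (p : E) : ℝ :=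
  fderiv ℝ f p (V p)

variable {V : E → E} {f g : E → ℝ} {p : E}

theorem derivAlong_congr_of_eventuallyEq (h : f =ᶠ[𝓝 p] g) :
    derivAlong V f p = derivAlong V g p := by
  rw [derivAlong, derivAlong, h.fderiv_eq]

theorem derivAlong_mul (hf : DifferentiableAt ℝ f p) (hg : DifferentiableAt ℝ g p) :
    derivAlong V (fun q => f q * g q) p = derivAlong V f p * g p + f p * derivAlong V g p := by
  simp only [derivAlong, fderiv_fun_mul hf hg, add_apply, smul_apply, smul_eq_mul]
  ring

theorem derivAlong_const_mul (hf : DifferentiableAt ℝ f p) (c : ℝ) :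
    derivAlong V (fun q => c * f q) p = c * derivAlong V f p := by
  simp [derivAlong, fderiv_const_mul hf]

theorem derivAlong_rpow (hf : DifferentiableAt ℝ f p) (hp : f p ≠ 0) (r : ℝ) :
    derivAlong V (fun q => f q ^ r) p = r * f p ^ (r - 1) * derivAlong V f p := by
  simp [derivAlong, (hf.hasFDerivAt.rpow_const (p := r) (Or.inl hp)).fderiv, mul_assoc]

theorem differentiableAt_derivAlong (hf : ContDiffAt ℝ 2 f p) (hV : DifferentiableAt ℝ V p) :
    DifferentiableAt ℝ (derivAlong V f) p :=
  ((hf.fderiv_right (m := 1) (by norm_num)).differentiableAt one_ne_zero).clm_apply hV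

theorem derivAlong_derivAlong_rpow (hf : ContDiffAt ℝ 2 f p) (hV : DifferentiableAt ℝ V p)
    (hp : f p ≠ 0) (r : ℝ) :
    derivAlong V (derivAlong V (fun q => f q ^ r)) p =
      r * ((r - 1) * f p ^ (r - 2) * derivAlong V f p ^ 2
        + f p ^ (r - 1) * derivAlong V (derivAlong V f) p) := by
  have hfp : DifferentiableAt ℝ f p := hf.differentiableAt (by norm_num)
  have hev : derivAlong V (fun q => f q ^ r) =ᶠ[𝓝 p]
      fun q => r * (f q ^ (r - 1) * derivAlong V f q) := by
    filter_upwards [hf.eventually (by simp), hf.continuousAt.eventually_ne hp] with q hq hq'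
    rw [derivAlong_rpow (hq.differentiableAt (by norm_num)) hq' r, mul_assoc]
  have hfp' : DifferentiableAt ℝ (fun q => f q ^ (r - 1)) p := hfp.rpow_const (Or.inl hp)
  have hDf : DifferentiableAt ℝ (derivAlong V f) p := differentiableAt_derivAlong hf hV
  have hprod : DifferentiableAt ℝ (fun q => f q ^ (r - 1) * derivAlong V f q) p := hfp'.mul hDf
  rw [derivAlong_congr_of_eventuallyEq hev, derivAlong_const_mul hprod,
    derivAlong_mul hfp' hDf, derivAlong_rpow hfp hp, show r - 1 - 1 = r - 2 by ring]
  ring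

end DerivAlong

section HeisenbergGauge

-- The fourth power of a weighted Korányi gauge on the Heisenberg group.
noncomputable def heisenbergGauge (D11 D22 : ℝ) (p : ℝ × ℝ × ℝ) : ℝ :=
  (1 / 16) * (p.1 ^ 2 / D22 + p.2.2 ^ 2 / D11) ^ 2
    + (p.2.1 - p.1 * p.2.2 / 2) ^ 2 / (D11 * D22)

theorem ufun_eq_heisenbergGauge_rpow (D11 D22 : ℝ) :
    ufun D11 D22 = fun p => heisenbergGauge D11 D22 p ^ (-(1 : ℝ) / 2) :=
  rfl

theorem Dtheta_eq_derivAlong : Dtheta = derivAlong fun _ => ((0, 0, 1) : ℝ × ℝ × ℝ) :=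
  rfl

theorem Dhor_eq_derivAlong : Dhor = derivAlong fun p : ℝ × ℝ × ℝ => (1, p.2.2, 0) :=
  rfl

theorem contDiff_heisenbergGauge (D11 D22 : ℝ) {n : WithTop ℕ∞} :
    ContDiff ℝ n (heisenbergGauge D11 D22) := by
  unfold heisenbergGauge
  fun_prop

theorem heisenbergGauge_pos {D11 D22 : ℝ} (h11 : 0 < D11) (h22 : 0 < D22) {p : ℝ × ℝ × ℝ}
    (hp : p ≠ 0) :
    0 < heisenbergGauge D11 D22 p := by
  obtain ⟨x, y, θ⟩ := p
  unfold heisenbergGauge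
  by_cases hxθ : x = 0 ∧ θ = 0
  · obtain ⟨rfl, rfl⟩ := hxθ
    have hy : y ≠ 0 := fun hy => hp (by simp [hy])
    norm_num
    positivity
  · have hA : 0 < x ^ 2 / D22 + θ ^ 2 / D11 := by
      rcases not_and_or.1 hxθ with hx | hθ <;> positivity
    positivity

theorem Dtheta_heisenbergGauge (D11 D22 : ℝ) :
    Dtheta (heisenbergGauge D11 D22) = fun p =>
      (p.1 ^ 2 / D22 + p.2.2 ^ 2 / D11) * p.2.2 / (4 * D11)
        - (p.2.1 - p.1 * p.2.2 / 2) * p.1 / (D11 * D22) := by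
  ext p
  unfold Dtheta heisenbergGauge
  simp only [div_eq_mul_inv]
  simp (disch := fun_prop) only [fderiv_fun_add, fderiv_fun_sub, fderiv_fun_mul, fderiv_fun_pow,
    fderiv_fun_const, fderiv.fst, fderiv.snd, fderiv_fun_id, add_apply, sub_apply, smul_apply,
    ContinuousLinearMap.comp_apply, ContinuousLinearMap.coe_fst', ContinuousLinearMap.coe_snd',
    ContinuousLinearMap.id_apply, Pi.zero_apply, zero_apply, smul_eq_mul,
    nsmul_eq_mul]
  ring

theorem Dhor_heisenbergGauge (D11 D22 : ℝ) :
    Dhor (heisenbergGauge D11 D22) = fun p =>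
      (p.1 ^ 2 / D22 + p.2.2 ^ 2 / D11) * p.1 / (4 * D22)
        + (p.2.1 - p.1 * p.2.2 / 2) * p.2.2 / (D11 * D22) := by
  ext p
  unfold Dhor heisenbergGauge
  simp only [div_eq_mul_inv]
  simp (disch := fun_prop) only [fderiv_fun_add, fderiv_fun_sub, fderiv_fun_mul, fderiv_fun_pow,
    fderiv_fun_const, fderiv.fst, fderiv.snd, fderiv_fun_id, add_apply, sub_apply, smul_apply,
    ContinuousLinearMap.comp_apply, ContinuousLinearMap.coe_fst', ContinuousLinearMap.coe_snd',
    ContinuousLinearMap.id_apply, Pi.zero_apply, zero_apply, smul_eq_mul,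
    nsmul_eq_mul]
  ring

theorem Dtheta_Dtheta_heisenbergGauge (D11 D22 : ℝ) (p : ℝ × ℝ × ℝ) :
    Dtheta (Dtheta (heisenbergGauge D11 D22)) p =
      p.2.2 ^ 2 / (2 * D11 ^ 2) + (p.1 ^ 2 / D22 + p.2.2 ^ 2 / D11) / (4 * D11)
        + p.1 ^ 2 / (2 * D11 * D22) := by
  rw [Dtheta_heisenbergGauge]
  unfold Dtheta
  simp only [div_eq_mul_inv]
  simp (disch := fun_prop) only [fderiv_fun_add, fderiv_fun_sub, fderiv_fun_mul, fderiv_fun_pow,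
    fderiv_fun_const, fderiv.fst, fderiv.snd, fderiv_fun_id, add_apply, sub_apply, smul_apply,
    ContinuousLinearMap.comp_apply, ContinuousLinearMap.coe_fst', ContinuousLinearMap.coe_snd',
    ContinuousLinearMap.id_apply, Pi.zero_apply, zero_apply, smul_eq_mul,
    nsmul_eq_mul]
  ring

theorem Dhor_Dhor_heisenbergGauge (D11 D22 : ℝ) (p : ℝ × ℝ × ℝ) :
    Dhor (Dhor (heisenbergGauge D11 D22)) p =
      p.1 ^ 2 / (2 * D22 ^ 2) + (p.1 ^ 2 / D22 + p.2.2 ^ 2 / D11) / (4 * D22)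
        + p.2.2 ^ 2 / (2 * D11 * D22) := by
  rw [Dhor_heisenbergGauge]
  unfold Dhor
  simp only [div_eq_mul_inv]
  simp (disch := fun_prop) only [fderiv_fun_add, fderiv_fun_sub, fderiv_fun_mul, fderiv_fun_pow,
    fderiv_fun_const, fderiv.fst, fderiv.snd, fderiv_fun_id, add_apply, sub_apply, smul_apply,
    ContinuousLinearMap.comp_apply, ContinuousLinearMap.coe_fst', ContinuousLinearMap.coe_snd',
    ContinuousLinearMap.id_apply, Pi.zero_apply, zero_apply, smul_eq_mul,
    nsmul_eq_mul]
  ring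

theorem Dtheta_sq_add_Dhor_sq_heisenbergGauge {D11 D22 : ℝ} (h11 : D11 ≠ 0) (h22 : D22 ≠ 0)
    (p : ℝ × ℝ × ℝ) :
    D11 * Dtheta (heisenbergGauge D11 D22) p ^ 2 + D22 * Dhor (heisenbergGauge D11 D22) p ^ 2 =
      (p.1 ^ 2 / D22 + p.2.2 ^ 2 / D11) * heisenbergGauge D11 D22 p := by
  rw [Dtheta_heisenbergGauge, Dhor_heisenbergGauge, heisenbergGauge]
  field_simp
  ring

theorem Dtheta_Dtheta_add_Dhor_Dhor_heisenbergGauge {D11 D22 : ℝ} (h11 : D11 ≠ 0)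
    (h22 : D22 ≠ 0) (p : ℝ × ℝ × ℝ) :
    D11 * Dtheta (Dtheta (heisenbergGauge D11 D22)) p
        + D22 * Dhor (Dhor (heisenbergGauge D11 D22)) p =
      3 / 2 * (p.1 ^ 2 / D22 + p.2.2 ^ 2 / D11) := by
  rw [Dtheta_Dtheta_heisenbergGauge, Dhor_Dhor_heisenbergGauge]
  field_simp
  ring

end HeisenbergGauge

theorem stmt_11 (D11 D22 : ℝ) (h11 : 0 < D11) (h22 : 0 < D22) :
    ContDiffOn ℝ ∞ (ufun D11 D22) {p : ℝ × ℝ × ℝ | p ≠ 0} ∧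
    ∀ p : ℝ × ℝ × ℝ, p ≠ 0 →
      D11 * Dtheta (Dtheta (ufun D11 D22)) p + D22 * Dhor (Dhor (ufun D11 D22)) p = 0 := by
  set Q := heisenbergGauge D11 D22
  refine ⟨fun p hp => ((contDiff_heisenbergGauge D11 D22).contDiffAt.rpow_const_of_ne
    (heisenbergGauge_pos h11 h22 hp).ne').contDiffWithinAt, fun p hp => ?_⟩
  have hQ : Q p ≠ 0 := (heisenbergGauge_pos h11 h22 hp).ne'
  have hQ2 : ContDiffAt ℝ 2 Q p := (contDiff_heisenbergGauge D11 D22).contDiffAt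
  rw [ufun_eq_heisenbergGauge_rpow, Dtheta_eq_derivAlong, Dhor_eq_derivAlong,
    derivAlong_derivAlong_rpow hQ2 (by fun_prop) hQ,
    derivAlong_derivAlong_rpow hQ2 (by fun_prop) hQ,
    ← Dtheta_eq_derivAlong, ← Dhor_eq_derivAlong]
  have hpow : Q p ^ (-(1 : ℝ) / 2 - 1) = Q p ^ (-(1 : ℝ) / 2 - 2) * Q p := by
    rw [← Real.rpow_add_one hQ]
    ring_nf
  rw [hpow]
  linear_combination
    (3 / 4 * Q p ^ (-(1 : ℝ) / 2 - 2)) * Dtheta_sq_add_Dhor_sq_heisenbergGauge h11.ne' h22.ne' p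
      - (1 / 2 * Q p ^ (-(1 : ℝ) / 2 - 2) * Q p)
        * Dtheta_Dtheta_add_Dhor_Dhor_heisenbergGauge h11.ne' h22.ne' p
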